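/- Let F : ℝ^d × ℝ → ℝ^d be C^3 with F_x invertible in a neighborhood of (x₀,λ₀), and suppose y(h) is a path with F(y(h), λ₀+h) = h² c + O(h³) for some c ∈ ℝ^d and y(h) = x₀ + O(h). Then the Newton update vector n(h) := -F_x(y(h),λ₀+h)⁻¹ F(y(h),λ₀+h) satisfies n(h) = -h² F_x(x₀,λ₀)⁻¹ c + O(h³), and if c ≠ 0 then ‖n(h)‖ = δ₂ h² + O(h³) with δ₂ = ‖F_x(x₀,λ₀)⁻¹ c‖ > 0. -/

import Mathlib

/-!
Write `A p = F_x(p)⁻¹`, `A₀ = A (x₀, l₀)` and `r h = F (y h) (l₀ + h)`. The Newton update splits as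
`-A (r - h² c) - (A - A₀) (h² c)` up to the main term `-h² A₀ c`. The first piece is
`O(1) · O(h³)`. For the second, `p ↦ A p` is differentiable at `(x₀, l₀)` (inversion is smooth
on the units of a complete normed algebra and `F_x` is `C¹`), and the path `(y h, l₀ + h)` stays
within `O(h)` of `(x₀, l₀)`, so `A - A₀ = O(h)`. The norm expansion then follows from
`|‖a‖ - ‖b‖| ≤ ‖a - b‖`, and `δ₂ > 0` because `A₀` is injective.
-/

open Asymptotics Filter Topology

section BoundNearZero

variable {E : Type*} [NormedAddCommGroup E] {f : ℝ → E} {g : ℝ → ℝ}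

theorem isBigO_nhds_zero_of_bound
    (h : ∃ C > (0:ℝ), ∃ h₀ > (0:ℝ), ∀ h : ℝ, |h| ≤ h₀ → ‖f h‖ ≤ C * g h) :
    f =O[𝓝 0] g := by
  obtain ⟨C, hC, h₀, hh₀, hbound⟩ := h
  refine IsBigO.of_bound C ?_
  filter_upwards [Metric.closedBall_mem_nhds (0 : ℝ) hh₀] with h hh
  rw [Metric.mem_closedBall, dist_zero_right, Real.norm_eq_abs] at hh
  exact (hbound h hh).trans (mul_le_mul_of_nonneg_left (le_abs_self _) hC.le)

theorem exists_bound_of_isBigO_nhds_zero (hg : ∀ h, 0 ≤ g h) (hfg : f =O[𝓝 0] g) :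
    ∃ C > (0:ℝ), ∃ h₀ > (0:ℝ), ∀ h : ℝ, |h| ≤ h₀ → ‖f h‖ ≤ C * g h := by
  obtain ⟨C, hC, hbound⟩ := hfg.exists_pos
  obtain ⟨ε, hε, hball⟩ := Metric.mem_nhds_iff.mp hbound.bound
  refine ⟨C, hC, ε / 2, half_pos hε, fun h hh => ?_⟩
  have hmem : h ∈ Metric.ball (0 : ℝ) ε := by
    rw [Metric.mem_ball, dist_zero_right, Real.norm_eq_abs]
    linarith
  have hfg : ‖f h‖ ≤ C * ‖g h‖ := hball hmem
  rwa [Real.norm_eq_abs, abs_of_nonneg (hg h)] at hfg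

end BoundNearZero

theorem tendsto_nhds_of_sub_isBigO_abs {E : Type*} [NormedAddCommGroup E]
    {f : ℝ → E} {a : E} (h : (fun t => f t - a) =O[𝓝 0] fun t => |t|) :
    Tendsto f (𝓝 0) (𝓝 a) :=
  tendsto_sub_nhds_zero_iff.mp (h.trans_tendsto (continuous_abs.tendsto' 0 0 abs_zero))

theorem Asymptotics.IsBigO.clm_apply {α 𝕜 E F : Type*} [NontriviallyNormedField 𝕜]
    [NormedAddCommGroup E] [NormedSpace 𝕜 E] [NormedAddCommGroup F] [NormedSpace 𝕜 F]
    {l : Filter α} {A : α → E →L[𝕜] F} {u : α → E} {g v : α → ℝ}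
    (hA : A =O[l] g) (hu : u =O[l] v) : (fun x => A x (u x)) =O[l] fun x => g x * v x :=
  isBoundedBilinearMap_apply.isBigO_comp.trans (hA.norm_left.mul hu.norm_left)

theorem isBigO_norm_sub_norm {α E : Type*} [NormedAddCommGroup E] {l : Filter α}
    {f f' : α → E} {g : α → ℝ} (h : (fun x => f x - f' x) =O[l] g) :
    (fun x => ‖f x‖ - ‖f' x‖) =O[l] g :=
  (IsBigO.of_bound 1 (Eventually.of_forall fun x => by
    simpa only [one_mul, Real.norm_eq_abs] using abs_norm_sub_norm_le (f x) (f' x))).trans h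

theorem ringInverse_apply_ne_zero {𝕜 E : Type*} [NontriviallyNormedField 𝕜]
    [NormedAddCommGroup E] [NormedSpace 𝕜 E] {f : E →L[𝕜] E} (hf : IsUnit f) {c : E}
    (hc : c ≠ 0) : Ring.inverse f c ≠ 0 := by
  intro h0
  have hfc := congrArg f h0
  rw [← mul_apply_eq_comp, Ring.mul_inverse_cancel f hf, map_zero] at hfc
  exact hc hfc

theorem DifferentiableAt.fderiv_comp_prodMk_left {𝕜 E F G : Type*} [NontriviallyNormedField 𝕜]
    [NormedAddCommGroup E] [NormedSpace 𝕜 E] [NormedAddCommGroup F] [NormedSpace 𝕜 F]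
    [NormedAddCommGroup G] [NormedSpace 𝕜 G] {f : E × F → G} {x : E} {y : F}
    (hf : DifferentiableAt 𝕜 f (x, y)) :
    fderiv 𝕜 (fun z => f (z, y)) x = (fderiv 𝕜 f (x, y)).comp (ContinuousLinearMap.inl 𝕜 E F) :=
  (hf.hasFDerivAt.comp x (hasFDerivAt_prodMk_left x y)).fderiv

theorem ContDiff.contDiff_fderiv_comp_prodMk_left {𝕜 E F G : Type*} [NontriviallyNormedField 𝕜]
    [NormedAddCommGroup E] [NormedSpace 𝕜 E] [NormedAddCommGroup F] [NormedSpace 𝕜 F]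
    [NormedAddCommGroup G] [NormedSpace 𝕜 G] {f : E × F → G} {m n : WithTop ℕ∞}
    (hf : ContDiff 𝕜 n f) (hmn : m + 1 ≤ n) :
    ContDiff 𝕜 m fun p : E × F => fderiv 𝕜 (fun z => f (z, p.2)) p.1 := by
  have hdiff : Differentiable 𝕜 f := hf.differentiable (ne_bot_of_le_ne_bot (by simp) hmn)
  simp only [fun p : E × F => (hdiff p).fderiv_comp_prodMk_left]
  exact (hf.fderiv_right hmn).clm_comp contDiff_const

theorem isBigO_ringInverse_sub {𝕜 P R : Type*} [NontriviallyNormedField 𝕜]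
    [NormedAddCommGroup P] [NormedSpace 𝕜 P] [NormedRing R] [NormedAlgebra 𝕜 R] [CompleteSpace R]
    {G : P → R} {p₀ : P} (hG : DifferentiableAt 𝕜 G p₀) (hu : IsUnit (G p₀)) :
    (fun p => Ring.inverse (G p) - Ring.inverse (G p₀)) =O[𝓝 p₀] fun p => p - p₀ :=
  ((differentiableAt_inverse hu).comp p₀ hG).isBigO_sub

theorem newton_update_isBigO {E : Type*} [NormedAddCommGroup E] [NormedSpace ℝ E]
    {A : ℝ → E →L[ℝ] E} {A₀ : E →L[ℝ] E} {r : ℝ → E} {c : E}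
    (hA : (fun h => A h - A₀) =O[𝓝 0] fun h => |h|)
    (hr : (fun h => r h - h ^ 2 • c) =O[𝓝 0] fun h => |h| ^ 3) :
    (fun h => -A h (r h) + h ^ 2 • A₀ c) =O[𝓝 0] fun h => |h| ^ 3 := by
  have hA_tendsto : Tendsto A (𝓝 0) (𝓝 A₀) := tendsto_nhds_of_sub_isBigO_abs hA
  have hsq : (fun h : ℝ => h ^ 2 • c) =O[𝓝 0] fun h => |h| ^ 2 :=
    IsBigO.of_bound ‖c‖ (Eventually.of_forall fun h => by
      rw [norm_smul, norm_pow, Real.norm_eq_abs, Real.norm_eq_abs, abs_pow, abs_abs, mul_comm])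
  have hres : (fun h => A h (r h - h ^ 2 • c)) =O[𝓝 0] fun h => |h| ^ 3 :=
    ((hA_tendsto.isBigO_one ℝ).clm_apply hr).congr_right fun h => one_mul _
  have hlin : (fun h => (A h - A₀) (h ^ 2 • c)) =O[𝓝 0] fun h => |h| ^ 3 :=
    (hA.clm_apply hsq).congr_right fun h => by ring
  refine (hres.neg_left.sub hlin).congr_left fun h => ?_
  simp only [map_sub, map_smul, sub_apply]
  module

/-- **Expansion of the first Newton update (indicator `δ`).** If `F` is `C³` with `F_x`
invertible near `(x₀,l₀)`, and `y(h)` is a prediction path with `y(h) = x₀ + O(h)` and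
residual `F(y(h), l₀+h) = h² c + O(h³)`, then the Newton update
`n(h) = -F_x(y(h),l₀+h)⁻¹ F(y(h),l₀+h)` satisfies `n(h) = -h² F_x(x₀,l₀)⁻¹ c + O(h³)`;
if moreover `c ≠ 0` then `‖n(h)‖ = δ₂ h² + O(h³)` with `δ₂ = ‖F_x(x₀,l₀)⁻¹ c‖ > 0`. -/
theorem stmt17 {d : ℕ} (F : EuclideanSpace ℝ (Fin d) → ℝ → EuclideanSpace ℝ (Fin d))
    (hF : ContDiff ℝ 3 (fun p : EuclideanSpace ℝ (Fin d) × ℝ => F p.1 p.2))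
    (x₀ : EuclideanSpace ℝ (Fin d)) (l₀ : ℝ) (c : EuclideanSpace ℝ (Fin d))
    (hinv : ∃ U ∈ nhds ((x₀, l₀) : EuclideanSpace ℝ (Fin d) × ℝ), ∀ p ∈ U,
      IsUnit (fderiv ℝ (fun z => F z p.2) p.1))
    (y : ℝ → EuclideanSpace ℝ (Fin d))
    (hy : ∃ C₁ > (0:ℝ), ∃ h₁ > (0:ℝ), ∀ h : ℝ, |h| ≤ h₁ → ‖y h - x₀‖ ≤ C₁ * |h|)
    (hres : ∃ C₂ > (0:ℝ), ∃ h₂ > (0:ℝ), ∀ h : ℝ, |h| ≤ h₂ →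
      ‖F (y h) (l₀ + h) - h ^ 2 • c‖ ≤ C₂ * |h| ^ 3) :
    (∃ C₃ > (0:ℝ), ∃ h₃ > (0:ℝ), ∀ h : ℝ, |h| ≤ h₃ →
      ‖-(Ring.inverse (fderiv ℝ (fun z => F z (l₀ + h)) (y h))) (F (y h) (l₀ + h)) +
        h ^ 2 • (Ring.inverse (fderiv ℝ (fun z => F z l₀) x₀)) c‖ ≤ C₃ * |h| ^ 3) ∧
    (c ≠ 0 →
      0 < ‖(Ring.inverse (fderiv ℝ (fun z => F z l₀) x₀)) c‖ ∧
      ∃ C₄ > (0:ℝ), ∃ h₄ > (0:ℝ), ∀ h : ℝ, |h| ≤ h₄ →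
        |‖-(Ring.inverse (fderiv ℝ (fun z => F z (l₀ + h)) (y h))) (F (y h) (l₀ + h))‖ -
          ‖(Ring.inverse (fderiv ℝ (fun z => F z l₀) x₀)) c‖ * h ^ 2| ≤ C₄ * |h| ^ 3) := by
  obtain ⟨U, hU, hUinv⟩ := hinv
  have hFx : DifferentiableAt ℝ (fun p : EuclideanSpace ℝ (Fin d) × ℝ =>
      fderiv ℝ (fun z => F z p.2) p.1) (x₀, l₀) :=
    ((hF.contDiff_fderiv_comp_prodMk_left (m := 1) (by norm_num)).differentiable
      one_ne_zero).differentiableAt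
  have hpath : (fun h => ((y h, l₀ + h) : EuclideanSpace ℝ (Fin d) × ℝ) - (x₀, l₀))
      =O[𝓝 0] fun h => |h| :=
    ((isBigO_nhds_zero_of_bound hy).prod_left (isBigO_abs_right.mpr (isBigO_refl _ _))).congr_left
      fun h => by simp
  have hu₀ := hUinv _ (mem_of_mem_nhds hU)
  have hA := ((isBigO_ringInverse_sub hFx hu₀).comp_tendsto
    (tendsto_nhds_of_sub_isBigO_abs hpath)).trans hpath
  have hN := newton_update_isBigO hA (isBigO_nhds_zero_of_bound hres)
  refine ⟨exists_bound_of_isBigO_nhds_zero (fun h => by positivity) hN, fun hc =>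
    ⟨norm_pos_iff.mpr (ringInverse_apply_ne_zero hu₀ hc), ?_⟩⟩
  have hnorm := isBigO_norm_sub_norm (hN.congr_left fun h => (sub_neg_eq_add _ _).symm)
  simpa [norm_smul, mul_comm] using
    exists_bound_of_isBigO_nhds_zero (fun h => by positivity) hnorm
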